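/- arXiv:1402.2460 — 3 statements merged into one kernel-verified Lean document; each statement's English description precedes it below -/
import Mathlib

section
/- (Theorem 1, forward direction) If (R̄, r̄, s̄, t) is an optimal solution of problem (III), then (R̄, r̄, ŝ, t), where ŝ_i := R̄_i − r̄_i for every i ∈ V, is an optimal solution of problem (III′), and moreover ∑_{i∈V} Q_i(ŝ_i) + ∑_{(i,j)∈E} P_{ij}(t_{ij}) = ∑_{i∈V} P_i(s̄_i) + ∑_{(i,j)∈E} P_{ij}(t_{ij}). -/
/-- Feasibility for problem (III): constraints (IIa), (IIb), (IIc), (IId), (IIf), (IIg)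
and the lower bound on `t`. -/
def FeasIII {V : Type*} (E : Finset (V × V)) (T Nbar : ℝ) (w : V × V → ℝ)
    (R r s : V → ℝ) (t : V × V → ℝ) : Prop :=
  (∀ i, s i ≤ R i - r i) ∧
  (∀ i, R i - r i ≤ T) ∧
  (∀ e ∈ E, -(T * w e) ≤ r e.2 - r e.1) ∧
  (∀ i, 0 ≤ R i ∧ R i ≤ Nbar) ∧
  (∀ i, 0 ≤ r i ∧ r i ≤ Nbar) ∧
  (∀ i, 0 ≤ s i ∧ s i ≤ T) ∧
  (∀ e ∈ E, t e ≤ R e.2 - R e.1) ∧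
  (∀ e ∈ E, -(T * w e) ≤ t e)

/-- Feasibility for problem (III′): constraints (IIc), (IId), (IIf), (IIg),
the lower bound on `t`, and the equality `R̄ i - r̄ i = s̄ i`. -/
def FeasIII' {V : Type*} (E : Finset (V × V)) (T Nbar : ℝ) (w : V × V → ℝ)
    (R r s : V → ℝ) (t : V × V → ℝ) : Prop :=
  (∀ e ∈ E, -(T * w e) ≤ r e.2 - r e.1) ∧
  (∀ i, 0 ≤ R i ∧ R i ≤ Nbar) ∧
  (∀ i, 0 ≤ r i ∧ r i ≤ Nbar) ∧
  (∀ i, 0 ≤ s i ∧ s i ≤ T) ∧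
  (∀ e ∈ E, t e ≤ R e.2 - R e.1) ∧
  (∀ e ∈ E, -(T * w e) ≤ t e) ∧
  (∀ i, R i - r i = s i)

/-- Objective value `∑ i, G i (s i) + ∑ (i,j) ∈ E, Pe (i,j) (t (i,j))`
for a vertex cost family `G` and edge cost family `Pe`. -/
def objFn {V : Type*} [Fintype V] (E : Finset (V × V)) (G : V → ℝ → ℝ)
    (Pe : V × V → ℝ → ℝ) (s : V → ℝ) (t : V × V → ℝ) : ℝ :=
  ∑ i, G i (s i) + ∑ e ∈ E, Pe e (t e)

/-- The envelope `Q i (x) = P i (min x (sstar i))`, i.e. `Q i x = P i x` for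
`x ≤ sstar i` and `Q i x = P i (sstar i)` for `x > sstar i`. -/
def Qfun {V : Type*} (P : V → ℝ → ℝ) (sstar : V → ℝ) (i : V) (x : ℝ) : ℝ :=
  P i (min x (sstar i))

/-!
Truncating `s̄` at the minimisers `s*` turns any feasible point of (III′) into a feasible point of
(III) with the same cost, since `Q_i(s) = P_i(min(s, s_i*))`; so the optimum of (III) is at most
that of (III′). Conversely `Q_i(R̄_i − r̄_i) ≤ P_i(s̄_i)`, because `s̄_i ≤ R̄_i − r̄_i` and a convex
function is antitone to the left of its minimiser. Both optima therefore coincide and are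
attained at `(R̄, r̄, R̄ − r̄, t)`.
-/

theorem ConvexOn.antitoneOn_of_isMinOn {𝕜 β : Type*} [Field 𝕜] [LinearOrder 𝕜]
    [IsStrictOrderedRing 𝕜] [AddCommMonoid β] [LinearOrder β] [IsOrderedCancelAddMonoid β]
    [Module 𝕜 β] [PosSMulStrictMono 𝕜 β] {s : Set 𝕜} {f : 𝕜 → β} {m : 𝕜} (hf : ConvexOn 𝕜 s f)
    (hm : m ∈ s) (hmin : IsMinOn f s m) : AntitoneOn f (s ∩ Set.Iic m) := by
  rintro a ⟨ha, -⟩ b ⟨hb, hbm : b ≤ m⟩ hab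
  rcases hbm.lt_or_eq with hbm | rfl
  · exact hf.le_left_of_right_le'' ha hm hab hbm (isMinOn_iff.mp hmin b hb)
  · exact isMinOn_iff.mp hmin a ha

section

variable {V : Type*} {E : Finset (V × V)} {T Nbar : ℝ} {w : V × V → ℝ} {R r s : V → ℝ}
  {t : V × V → ℝ}

theorem FeasIII.toFeasIII' (h : FeasIII E T Nbar w R r s t) :
    FeasIII' E T Nbar w R r (fun i => R i - r i) t := by
  obtain ⟨hsub, hle, hc, hR, hr, hs, hg, ht⟩ := h
  exact ⟨hc, hR, hr, fun i => ⟨(hs i).1.trans (hsub i), hle i⟩, hg, ht, fun _ => rfl⟩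

theorem FeasIII'.toFeasIII_min {sstar : V → ℝ} (h : FeasIII' E T Nbar w R r s t)
    (hs0 : ∀ i, 0 ≤ sstar i) (hsT : ∀ i, sstar i ≤ T) :
    FeasIII E T Nbar w R r (fun i => min (s i) (sstar i)) t := by
  obtain ⟨hc, hR, hr, hs, hg, ht, heq⟩ := h
  refine ⟨fun i => ?_, fun i => ?_, hc, hR, hr,
    fun i => ⟨le_min (hs i).1 (hs0 i), (min_le_right _ _).trans (hsT i)⟩, hg, ht⟩
  · rw [heq]
    exact min_le_left _ _
  · rw [heq]
    exact (hs i).2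

end

theorem Qfun_le_of_le {V : Type*} {P : V → ℝ → ℝ} {sstar : V → ℝ} {i : V}
    (hP : ConvexOn ℝ Set.univ (P i)) (hmin : ∀ x, P i (sstar i) ≤ P i x) {x y : ℝ}
    (hyx : y ≤ x) : Qfun P sstar i x ≤ P i y := by
  rcases le_total x (sstar i) with hx | hx
  · rw [Qfun, min_eq_left hx]
    exact (hP.antitoneOn_of_isMinOn (Set.mem_univ _) fun z _ => hmin z)
      ⟨Set.mem_univ y, hyx.trans hx⟩ ⟨Set.mem_univ x, hx⟩ hyx
  · rw [Qfun, min_eq_right hx]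
    exact hmin y

theorem theorem1_forward_general
    (V : Type*) [Fintype V]
    (E : Finset (V × V))
    (T Nbar : ℝ)
    (w : V × V → ℝ)
    (P : V → ℝ → ℝ) (hPconv : ∀ i, ConvexOn ℝ Set.univ (P i))
    (sstar : V → ℝ) (hmin : ∀ i x, P i (sstar i) ≤ P i x)
    (hs0 : ∀ i, 0 ≤ sstar i) (hsT : ∀ i, sstar i ≤ T)
    (Pe : V × V → ℝ → ℝ)
    (R r s : V → ℝ) (t : V × V → ℝ)
    (hfeas : FeasIII E T Nbar w R r s t)
    (hopt : ∀ R' r' s' t', FeasIII E T Nbar w R' r' s' t' →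
      objFn E P Pe s t ≤ objFn E P Pe s' t') :
    FeasIII' E T Nbar w R r (fun i => R i - r i) t ∧
    (∀ R' r' s' t', FeasIII' E T Nbar w R' r' s' t' →
      objFn E (Qfun P sstar) Pe (fun i => R i - r i) t ≤
        objFn E (Qfun P sstar) Pe s' t') ∧
    objFn E (Qfun P sstar) Pe (fun i => R i - r i) t = objFn E P Pe s t := by
  have hQ_le_P : objFn E (Qfun P sstar) Pe (fun i => R i - r i) t ≤ objFn E P Pe s t := by
    unfold objFn
    gcongr with i
    exact Qfun_le_of_le (hPconv i) (hmin i) (hfeas.1 i)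
  have hP_le_Q : ∀ R' r' s' t', FeasIII' E T Nbar w R' r' s' t' →
      objFn E P Pe s t ≤ objFn E (Qfun P sstar) Pe s' t' :=
    fun R' r' s' t' h => hopt R' r' _ t' (h.toFeasIII_min hs0 hsT)
  exact ⟨hfeas.toFeasIII', fun R' r' s' t' h => hQ_le_P.trans (hP_le_Q R' r' s' t' h),
    le_antisymm hQ_le_P (hP_le_Q R r _ t hfeas.toFeasIII')⟩

/-- Theorem 1, forward direction: if `(R̄, r̄, s̄, t)` is an optimal solution of
problem (III), then `(R̄, r̄, ŝ, t)` with `ŝ i = R̄ i - r̄ i` is an optimal solution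
of problem (III′), and the two objective values coincide. -/
theorem theorem1_forward
    (V : Type*) [Fintype V]
    (E : Finset (V × V))
    (T Nbar : ℝ) (hT : 0 < T) (hN : 0 ≤ Nbar)
    (w : V × V → ℝ) (hw : ∀ e ∈ E, 0 ≤ w e)
    (P : V → ℝ → ℝ) (hPconv : ∀ i, ConvexOn ℝ Set.univ (P i))
    (sstar : V → ℝ) (hmin : ∀ i x, P i (sstar i) ≤ P i x)
    (hs0 : ∀ i, 0 ≤ sstar i) (hsT : ∀ i, sstar i ≤ T)
    (Pe : V × V → ℝ → ℝ)
    (R r s : V → ℝ) (t : V × V → ℝ)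
    (hfeas : FeasIII E T Nbar w R r s t)
    (hopt : ∀ R' r' s' t', FeasIII E T Nbar w R' r' s' t' →
      objFn E P Pe s t ≤ objFn E P Pe s' t') :
    FeasIII' E T Nbar w R r (fun i => R i - r i) t ∧
    (∀ R' r' s' t', FeasIII' E T Nbar w R' r' s' t' →
      objFn E (Qfun P sstar) Pe (fun i => R i - r i) t ≤
        objFn E (Qfun P sstar) Pe s' t') ∧
    objFn E (Qfun P sstar) Pe (fun i => R i - r i) t = objFn E P Pe s t :=
  theorem1_forward_general V E T Nbar w P hPconv sstar hmin hs0 hsT Pe R r s t hfeas hopt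
end

section
/- (Theorem 1, converse direction) If (R̂, r̂, ŝ, t) is an optimal solution of problem (III′), then (R̂, r̂, s̄, t), where s̄_i := min(s_i*, ŝ_i) for every i ∈ V, is an optimal solution of problem (III), and moreover the (III)-objective value of (R̂, r̂, s̄, t) equals the (III′)-objective value of (R̂, r̂, ŝ, t). -/
/-!
Every feasible point `(R, r, s, t)` of (III) yields the feasible point `(R, r, R - r, t)` of
(III′), since `s ≤ R - r`. A convex function with a global minimum at `m` is antitone on
`(-∞, m]`, so `Q i (R i - r i) = P i (min (R i - r i) (s⋆ i)) ≤ P i (s i)`; hence the optimal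
(III′)-value is a lower bound for the (III)-objective, and clipping `ŝ` at `s⋆` attains it.
-/

section ConvexMin

variable {𝕜 β : Type*} [Field 𝕜] [LinearOrder 𝕜] [IsStrictOrderedRing 𝕜]
  [AddCommMonoid β] [LinearOrder β] [IsOrderedCancelAddMonoid β]
  [Module 𝕜 β] [PosSMulStrictMono 𝕜 β] {s : Set 𝕜} {f : 𝕜 → β} {m : 𝕜}

theorem ConvexOn.antitoneOn_of_isMinOn_s1 (hf : ConvexOn 𝕜 s f) (hms : m ∈ s)
    (hm : IsMinOn f s m) : AntitoneOn f (s ∩ Set.Iic m) := by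
  intro a ha b hb hab
  rcases hb.2.eq_or_lt with rfl | hbm
  · exact hm ha.1
  · exact hf.le_left_of_right_le'' ha.1 hms hab hbm (hm hb.1)

theorem ConvexOn.apply_min_le_of_le (hf : ConvexOn 𝕜 Set.univ f)
    (hm : IsMinOn f Set.univ m) {x y : 𝕜} (hyx : y ≤ x) : f (min x m) ≤ f y := by
  rcases le_total y m with hym | hmy
  · exact hf.antitoneOn_of_isMinOn_s1 (Set.mem_univ m) hm ⟨Set.mem_univ y, hym⟩
      ⟨Set.mem_univ _, min_le_right x m⟩ (le_min hyx hym)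
  · rw [min_eq_right (hmy.trans hyx)]
    exact hm (Set.mem_univ y)

end ConvexMin

section Feasibility

variable {V : Type*} {E : Finset (V × V)} {T Nbar : ℝ} {w : V × V → ℝ}
  {R r s : V → ℝ} {t : V × V → ℝ}

theorem FeasIII.feasIII'_sub (h : FeasIII E T Nbar w R r s t) :
    FeasIII' E T Nbar w R r (R - r) t := by
  obtain ⟨hsle, hle, hr_edge, hR, hr, hs, hR_edge, ht⟩ := h
  exact ⟨hr_edge, hR, hr, fun i => ⟨(hs i).1.trans (hsle i), hle i⟩, hR_edge, ht,
    fun _ => rfl⟩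

theorem FeasIII'.feasIII_min (h : FeasIII' E T Nbar w R r s t) {m : V → ℝ}
    (hm0 : ∀ i, 0 ≤ m i) (hmT : ∀ i, m i ≤ T) :
    FeasIII E T Nbar w R r (fun i => min (m i) (s i)) t := by
  obtain ⟨hr_edge, hR, hr, hs, hR_edge, ht, hsub⟩ := h
  refine ⟨fun i => ?_, fun i => ?_, hr_edge, hR, hr,
    fun i => ⟨le_min (hm0 i) (hs i).1, min_le_of_left_le (hmT i)⟩, hR_edge, ht⟩
  · exact (hsub i).symm ▸ min_le_right _ _
  · exact (hsub i).symm ▸ (hs i).2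

end Feasibility

section Objective

variable {V : Type*} [Fintype V] {E : Finset (V × V)} {Pe : V × V → ℝ → ℝ}

theorem objFn_le_objFn {G G' : V → ℝ → ℝ} {s s' : V → ℝ} {t : V × V → ℝ}
    (h : ∀ i, G i (s i) ≤ G' i (s' i)) : objFn E G Pe s t ≤ objFn E G' Pe s' t :=
  add_le_add_left (Finset.sum_le_sum fun i _ => h i) _

theorem objFn_min_eq_objFn_Qfun (P : V → ℝ → ℝ) (sstar s : V → ℝ) (t : V × V → ℝ) :
    objFn E P Pe (fun i => min (sstar i) (s i)) t = objFn E (Qfun P sstar) Pe s t := by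
  simp only [objFn, Qfun, min_comm]

end Objective

theorem theorem1_converse_general
    (V : Type*) [Fintype V]
    (E : Finset (V × V))
    (T Nbar : ℝ)
    (w : V × V → ℝ)
    (P : V → ℝ → ℝ) (hPconv : ∀ i, ConvexOn ℝ Set.univ (P i))
    (sstar : V → ℝ) (hmin : ∀ i x, P i (sstar i) ≤ P i x)
    (hs0 : ∀ i, 0 ≤ sstar i) (hsT : ∀ i, sstar i ≤ T)
    (Pe : V × V → ℝ → ℝ)
    (R r s : V → ℝ) (t : V × V → ℝ)
    (hfeas : FeasIII' E T Nbar w R r s t)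
    (hopt : ∀ R' r' s' t', FeasIII' E T Nbar w R' r' s' t' →
      objFn E (Qfun P sstar) Pe s t ≤ objFn E (Qfun P sstar) Pe s' t') :
    FeasIII E T Nbar w R r (fun i => min (sstar i) (s i)) t ∧
    (∀ R' r' s' t', FeasIII E T Nbar w R' r' s' t' →
      objFn E P Pe (fun i => min (sstar i) (s i)) t ≤ objFn E P Pe s' t') ∧
    objFn E P Pe (fun i => min (sstar i) (s i)) t =
      objFn E (Qfun P sstar) Pe s t := by
  have hobj := objFn_min_eq_objFn_Qfun (E := E) (Pe := Pe) P sstar s t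
  refine ⟨hfeas.feasIII_min hs0 hsT, fun R' r' s' t' hfeas' => ?_, hobj⟩
  have hQ_le_P : ∀ i, Qfun P sstar i ((R' - r') i) ≤ P i (s' i) := fun i =>
    (hPconv i).apply_min_le_of_le (isMinOn_univ_iff.2 (hmin i)) (hfeas'.1 i)
  calc objFn E P Pe (fun i => min (sstar i) (s i)) t
      = objFn E (Qfun P sstar) Pe s t := hobj
    _ ≤ objFn E (Qfun P sstar) Pe (R' - r') t' := hopt _ _ _ _ hfeas'.feasIII'_sub
    _ ≤ objFn E P Pe s' t' := objFn_le_objFn hQ_le_P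

/-- Theorem 1, converse direction: if `(R̂, r̂, ŝ, t)` is an optimal solution of
problem (III′), then `(R̂, r̂, s̄, t)` with `s̄ i = min (sstar i) (ŝ i)` is an optimal
solution of problem (III), and the (III)-objective value of `(R̂, r̂, s̄, t)` equals
the (III′)-objective value of `(R̂, r̂, ŝ, t)`. -/
theorem theorem1_converse
    (V : Type*) [Fintype V]
    (E : Finset (V × V))
    (T Nbar : ℝ) (hT : 0 < T) (hN : 0 ≤ Nbar)
    (w : V × V → ℝ) (hw : ∀ e ∈ E, 0 ≤ w e)
    (P : V → ℝ → ℝ) (hPconv : ∀ i, ConvexOn ℝ Set.univ (P i))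
    (sstar : V → ℝ) (hmin : ∀ i x, P i (sstar i) ≤ P i x)
    (hs0 : ∀ i, 0 ≤ sstar i) (hsT : ∀ i, sstar i ≤ T)
    (Pe : V × V → ℝ → ℝ)
    (R r s : V → ℝ) (t : V × V → ℝ)
    (hfeas : FeasIII' E T Nbar w R r s t)
    (hopt : ∀ R' r' s' t', FeasIII' E T Nbar w R' r' s' t' →
      objFn E (Qfun P sstar) Pe s t ≤ objFn E (Qfun P sstar) Pe s' t') :
    FeasIII E T Nbar w R r (fun i => min (sstar i) (s i)) t ∧
    (∀ R' r' s' t', FeasIII E T Nbar w R' r' s' t' →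
      objFn E P Pe (fun i => min (sstar i) (s i)) t ≤ objFn E P Pe s' t') ∧
    objFn E P Pe (fun i => min (sstar i) (s i)) t =
      objFn E (Qfun P sstar) Pe s t :=
  theorem1_converse_general V E T Nbar w P hPconv sstar hmin hs0 hsT Pe R r s t hfeas hopt
end

section
/- (Convexity of the penalty-extended cost function P̄) The function P̄ is convex on ℝ. -/
/-!
`P̄` is the inf-convolution `P̄ x = min_{t ∈ [l, u]} (f t + M |x - t|)`: the minimum is attained at
the projection of `x` onto `[l, u]`, because that point lies between `x` and every `t ∈ [l, u]` and
`f` is `M`-Lipschitz. An inf-convolution of a convex function with the convex penalty `M · dist`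
is convex: combining minimisers for `x` and `y` gives an admissible candidate for any convex
combination of `x` and `y`.
-/

open Set

section InfConvolution

variable {E : Type*} [NormedAddCommGroup E] [NormedSpace ℝ E] {s : Set E} {f P : E → ℝ} {M : ℝ}

theorem isLeast_image_add_mul_dist_of_mem_segment {x c : E} (hc : c ∈ s)
    (hf : ∀ t ∈ s, f c - f t ≤ M * dist c t) (hcx : ∀ t ∈ s, c ∈ segment ℝ x t) :
    IsLeast ((fun t => f t + M * dist x t) '' s) (f c + M * dist x c) := by
  refine ⟨⟨c, hc, rfl⟩, ?_⟩
  rintro _ ⟨t, ht, rfl⟩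
  calc f c + M * dist x c ≤ f t + M * dist c t + M * dist x c := by linarith [hf t ht]
    _ = f t + M * dist x t := by rw [← dist_add_dist_of_mem_segment (hcx t ht)]; ring

theorem convexOn_univ_of_isLeast_image_add_mul_dist (hM : 0 ≤ M) (hf : ConvexOn ℝ s f)
    (hP : ∀ x, IsLeast ((fun t => f t + M * dist x t) '' s) (P x)) : ConvexOn ℝ univ P := by
  refine ⟨convex_univ, fun x _ y _ a b ha hb hab => ?_⟩
  obtain ⟨⟨t, ht, hPx⟩, -⟩ := hP x
  obtain ⟨⟨r, hr, hPy⟩, -⟩ := hP y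
  have hdist : dist (a • x + b • y) (a • t + b • r) ≤ a * dist x t + b * dist y r :=
    calc dist (a • x + b • y) (a • t + b • r) ≤ dist (a • x) (a • t) + dist (b • y) (b • r) :=
          dist_add_add_le _ _ _ _
      _ = a * dist x t + b * dist y r := by
          rw [dist_smul₀, dist_smul₀, Real.norm_of_nonneg ha, Real.norm_of_nonneg hb]
  calc P (a • x + b • y)
      ≤ f (a • t + b • r) + M * dist (a • x + b • y) (a • t + b • r) :=
        (hP _).2 ⟨_, hf.1 ht hr ha hb hab, rfl⟩
    _ ≤ (a * f t + b * f r) + M * (a * dist x t + b * dist y r) :=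
        add_le_add (hf.2 ht hr ha hb hab) (mul_le_mul_of_nonneg_left hdist hM)
    _ = a • P x + b • P y := by rw [← hPx, ← hPy, smul_eq_mul, smul_eq_mul]; ring

end InfConvolution

theorem Set.projIcc_mem_segment {l u : ℝ} (hlu : l ≤ u) (x : ℝ) {t : ℝ} (ht : t ∈ Icc l u) :
    (projIcc l u hlu x : ℝ) ∈ segment ℝ x t := by
  rw [segment_eq_uIcc]
  rcases le_total x l with hxl | hlx
  · rw [projIcc_of_le_left hlu hxl]
    exact mem_uIcc_of_le hxl ht.1
  rcases le_total x u with hxu | hux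
  · rw [projIcc_of_mem hlu ⟨hlx, hxu⟩]
    exact left_mem_uIcc
  · rw [projIcc_of_right_le hlu hux]
    exact mem_uIcc_of_ge ht.2 hux

/-- Convexity of the penalty-extended cost function `P̄`: given `l ≤ u`, a function
`f` convex on `[l, u]`, and `M ≥ 0` with `|f s - f t| ≤ M * |s - t|` for all
`s, t ∈ [l, u]` (`M` sufficiently large relative to the slopes of `f`), the function
`P̄` defined by `P̄ s = f l - M * (s - l)` for `s < l`, `P̄ s = f s` for `l ≤ s ≤ u`,
and `P̄ s = f u + M * (s - u)` for `s > u`, is convex on `ℝ`. -/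
theorem Pbar_convex
    (l u M : ℝ) (hlu : l ≤ u) (hM : 0 ≤ M)
    (f : ℝ → ℝ) (hf : ConvexOn ℝ (Set.Icc l u) f)
    (hLip : ∀ s ∈ Set.Icc l u, ∀ t ∈ Set.Icc l u, |f s - f t| ≤ M * |s - t|)
    (Pbar : ℝ → ℝ)
    (h1 : ∀ s : ℝ, s < l → Pbar s = f l - M * (s - l))
    (h2 : ∀ s : ℝ, l ≤ s → s ≤ u → Pbar s = f s)
    (h3 : ∀ s : ℝ, u < s → Pbar s = f u + M * (s - u)) :
    ConvexOn ℝ Set.univ Pbar := by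
  refine convexOn_univ_of_isLeast_image_add_mul_dist hM hf fun x => ?_
  have hPbar : Pbar x = f (projIcc l u hlu x) + M * dist x (projIcc l u hlu x) := by
    rw [Real.dist_eq]
    rcases lt_or_ge x l with hxl | hlx
    · rw [h1 x hxl, projIcc_of_le_left hlu hxl.le, abs_of_neg (sub_neg.2 hxl)]; ring
    rcases le_or_gt x u with hxu | hux
    · rw [h2 x hlx hxu, projIcc_of_mem hlu ⟨hlx, hxu⟩, sub_self, abs_zero, mul_zero, add_zero]
    · rw [h3 x hux, projIcc_of_right_le hlu hux.le, abs_of_pos (sub_pos.2 hux)]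
  rw [hPbar]
  refine isLeast_image_add_mul_dist_of_mem_segment (projIcc l u hlu x).2 (fun t ht => ?_)
    (fun t ht => projIcc_mem_segment hlu x ht)
  rw [Real.dist_eq]
  exact (le_abs_self _).trans (hLip _ (projIcc l u hlu x).2 t ht)
end
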